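/- In the BCK-algebra X'_n (n ≥ 5), the BCK-sequences starting from x = n−1 and y = n satisfy x_k = n−1−k for 1 ≤ k ≤ n−2 (so x_{n-2} = 1), while y_k = n−3 for all k ≥ 1 (so y_{n-2} = n−3); hence x_{n-2} ≠ y_{n-2}. -/

import Mathlib

/-- The operation of the linearly ordered BCK-algebra `X_n` written on natural
numbers: `x*y = 0` if `x ≤ y`, `x*0 = x`, `x*y = 1` if `x = y+1`, and
`x*y = x−y−1` if `x > y+1` and `y ≥ 1`. -/
def natStar (x y : ℕ) : ℕ :=
  if x ≤ y then 0 else if y = 0 then x else if x = y + 1 then 1 else x - y - 1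

/-- The operation of `X'_n = {0, 1, …, n}` written on natural numbers:
`x·y = x*y` for `x, y ≤ n−1`; `n·0 = n`; `n·y = n−y−1` for `1 ≤ y ≤ n−2`;
`n·(n−1) = 1`; `x·n = 0` for every `x ≠ n−1` (in particular `n·n = 0`);
and `(n−1)·n = 1`. -/
def primeVal (n x y : ℕ) : ℕ :=
  if y = n then (if x = n - 1 then 1 else 0)
  else if x = n then (if y = 0 then n else if y = n - 1 then 1 else n - y - 1)
  else natStar x y

theorem natStar_le (x y : ℕ) : natStar x y ≤ x := by
  unfold natStar; split_ifs <;> omega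

theorem primeVal_lt {n x y : ℕ} (hn : 1 ≤ n) (hx : x < n + 1) (hy : y < n + 1) :
    primeVal n x y < n + 1 := by
  have h := natStar_le x y
  unfold primeVal; split_ifs <;> omega

/-- The BCK-algebra operation of `X'_n = {0, 1, …, n}` (for `n ≥ 5`),
as an operation on `Fin (n+1)`. -/
def primeOp {n : ℕ} (hn : 5 ≤ n) (x y : Fin (n + 1)) : Fin (n + 1) :=
  ⟨primeVal n x y, primeVal_lt (by omega) x.isLt y.isLt⟩

/-- The pair of BCK-sequences `(x_k, y_k)` determined by starting elements
`x, y`:  `x_0 = x`, `y_0 = y`, `x_1 = y·(y·x)`, `y_1 = x·(x·y)`, and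
`x_k = x_{k-2}·(x_{k-2}·x_{k-1})`, `y_k = y_{k-2}·(y_{k-2}·y_{k-1})` for `k ≥ 2`. -/
def bckPair {X : Type*} (op : X → X → X) (x y : X) : ℕ → X × X
  | 0 => (x, y)
  | 1 => (op y (op y x), op x (op x y))
  | k + 2 =>
      (op (bckPair op x y k).1 (op (bckPair op x y k).1 (bckPair op x y (k + 1)).1),
       op (bckPair op x y k).2 (op (bckPair op x y k).2 (bckPair op x y (k + 1)).2))

/-!
From step one on, both sequences live in the linearly ordered part `{0, …, n−1}` of `X'_n`.
There `a·(a·(a−1)) = a·1 = a−2` makes the `x`-sequence descend by one per step, while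
`a·(a·a) = a·0 = a` keeps the `y`-sequence constant once two consecutive terms agree.
The top element `n` only matters at the start: `x_1 = n·(n·(n−1)) = n·1 = n−2` and
`y_2 = n·(n·(n−3)) = n·2 = n−3 = y_1`.
-/

section BckPair

variable {X Y : Type*} (op : X → X → X) (x y : X)

@[simp]
lemma bckPair_zero : bckPair op x y 0 = (x, y) := rfl

@[simp]
lemma bckPair_one : bckPair op x y 1 = (op y (op y x), op x (op x y)) := rfl

@[simp]
lemma bckPair_add_two (k : ℕ) :
    bckPair op x y (k + 2) =
      (op (bckPair op x y k).1 (op (bckPair op x y k).1 (bckPair op x y (k + 1)).1),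
       op (bckPair op x y k).2 (op (bckPair op x y k).2 (bckPair op x y (k + 1)).2)) := rfl

lemma bckPair_map {op' : Y → Y → Y} (f : X → Y) (hf : ∀ a b, f (op a b) = op' (f a) (f b))
    (k : ℕ) : bckPair op' (f x) (f y) k = Prod.map f f (bckPair op x y k) := by
  induction k using Nat.twoStepInduction with
  | zero => rfl
  | one => simp [hf]
  | more k ih ih' => simp [hf, ih, ih']

end BckPair

section NatStar

lemma natStar_self (a : ℕ) : natStar a a = 0 := by simp [natStar]

lemma natStar_zero (a : ℕ) : natStar a 0 = a := by unfold natStar; grind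

lemma natStar_pred {a : ℕ} (ha : 2 ≤ a) : natStar a (a - 1) = 1 := by
  unfold natStar; grind

lemma natStar_one {a : ℕ} (ha : 3 ≤ a) : natStar a 1 = a - 2 := by
  unfold natStar; grind

end NatStar

section PrimeVal

variable {n a : ℕ}

lemma primeVal_of_ne {x y : ℕ} (hx : x ≠ n) (hy : y ≠ n) : primeVal n x y = natStar x y := by
  simp [primeVal, hx, hy]

lemma primeVal_top_of_le {y : ℕ} (hy : 1 ≤ y) (hyn : y ≤ n - 2) :
    primeVal n n y = n - y - 1 := by
  unfold primeVal; grind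

lemma primeVal_pred_top : primeVal n (n - 1) n = 1 := by
  simp [primeVal]

lemma primeVal_top_pred (hn : 1 ≤ n) : primeVal n n (n - 1) = 1 := by
  unfold primeVal; grind

lemma primeVal_pred_step (ha : 3 ≤ a) (han : a < n) :
    primeVal n a (primeVal n a (a - 1)) = a - 2 := by
  rw [primeVal_of_ne (y := a - 1) (by omega) (by omega), natStar_pred (by omega),
    primeVal_of_ne (by omega) (by omega), natStar_one ha]

lemma primeVal_self_step (ha : a < n) : primeVal n a (primeVal n a a) = a := by
  rw [primeVal_of_ne (y := a) ha.ne ha.ne, natStar_self, primeVal_of_ne ha.ne (by omega),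
    natStar_zero]

lemma bckPair_primeVal_fst (hn : 3 ≤ n) {k : ℕ} (hk : k ≤ n - 2) :
    (bckPair (primeVal n) (n - 1) n k).1 = n - 1 - k := by
  induction k using Nat.twoStepInduction with
  | zero => rfl
  | one =>
    dsimp only [bckPair_one]
    rw [primeVal_top_pred (by omega), primeVal_top_of_le le_rfl (by omega)]
  | more k ih ih' =>
    have hsucc : n - 1 - (k + 1) = n - 1 - k - 1 := by omega
    dsimp only [bckPair_add_two]
    rw [ih (by omega), ih' (by omega), hsucc,
      primeVal_pred_step (by omega) (by omega)]
    omega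

lemma bckPair_primeVal_snd (hn : 4 ≤ n) {k : ℕ} (hk : 1 ≤ k) :
    (bckPair (primeVal n) (n - 1) n k).2 = n - 3 := by
  induction k using Nat.twoStepInduction with
  | zero => omega
  | one =>
    dsimp only [bckPair_one]
    rw [primeVal_pred_top, primeVal_of_ne (by omega) (by omega),
      natStar_one (by omega)]
    omega
  | more k ih ih' =>
    rcases Nat.eq_zero_or_pos k with rfl | hk
    · dsimp only [bckPair_add_two, bckPair_zero]
      rw [ih' le_rfl, primeVal_top_of_le (y := n - 3) (by omega) (by omega),
        primeVal_top_of_le (by omega) (by omega)]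
      omega
    · dsimp only [bckPair_add_two]
      rw [ih hk, ih' (by omega), primeVal_self_step (by omega)]

end PrimeVal

/-- In the BCK-algebra `X'_n` (`n ≥ 5`), the BCK-sequences starting from
`x = n−1` and `y = n` satisfy `x_k = n−1−k` for `1 ≤ k ≤ n−2`
(so `x_{n-2} = 1`), while `y_k = n−3` for all `k ≥ 1` (so `y_{n-2} = n−3`);
hence `x_{n-2} ≠ y_{n-2}`. -/
theorem primeOp_sequences_differ (n : ℕ) (hn : 5 ≤ n) :
    (∀ k : ℕ, 1 ≤ k → k ≤ n - 2 →
      (((bckPair (primeOp hn) ⟨n - 1, by omega⟩ ⟨n, by omega⟩ k).1 : Fin (n + 1)) : ℕ)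
        = n - 1 - k) ∧
    (((bckPair (primeOp hn) ⟨n - 1, by omega⟩ ⟨n, by omega⟩ (n - 2)).1 : Fin (n + 1)) : ℕ)
        = 1 ∧
    (∀ k : ℕ, 1 ≤ k →
      (((bckPair (primeOp hn) ⟨n - 1, by omega⟩ ⟨n, by omega⟩ k).2 : Fin (n + 1)) : ℕ)
        = n - 3) ∧
    (bckPair (primeOp hn) ⟨n - 1, by omega⟩ ⟨n, by omega⟩ (n - 2)).1 ≠
      (bckPair (primeOp hn) ⟨n - 1, by omega⟩ ⟨n, by omega⟩ (n - 2)).2 := by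
  have hval (k : ℕ) :
      Prod.map Fin.val Fin.val (bckPair (primeOp hn) ⟨n - 1, by omega⟩ ⟨n, by omega⟩ k) =
        bckPair (primeVal n) (n - 1) n k :=
    (bckPair_map (primeOp hn) _ _ Fin.val (fun _ _ => rfl) k).symm
  have hx (k : ℕ) (hk : k ≤ n - 2) :
      ((bckPair (primeOp hn) ⟨n - 1, by omega⟩ ⟨n, by omega⟩ k).1 : ℕ) = n - 1 - k :=
    (congrArg Prod.fst (hval k)).trans (bckPair_primeVal_fst (by omega) hk)
  have hy (k : ℕ) (hk : 1 ≤ k) :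
      ((bckPair (primeOp hn) ⟨n - 1, by omega⟩ ⟨n, by omega⟩ k).2 : ℕ) = n - 3 :=
    (congrArg Prod.snd (hval k)).trans (bckPair_primeVal_snd (by omega) hk)
  have hx_last := hx (n - 2) le_rfl
  have hy_last := hy (n - 2) (by omega)
  refine ⟨fun k _ hk => hx k hk, by omega, hy, fun h => ?_⟩
  have := congrArg Fin.val h
  omega
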